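/- arXiv:2101.05264 — 2 statements merged into one kernel-verified Lean document; each statement's English description precedes it below -/
import Mathlib

section
/- Let D be a solid tournament on a countably infinite vertex type. Then D has a solid ray, and there is a solid ray R* such that for every solid ray R of D there exist a ray R₁ equivalent to R, a ray R₂ equivalent to R*, and an infinite family of pairwise vertex-disjoint finite directed paths in D, each starting at a vertex in the image of R₁ and ending at a vertex in the image of R₂. (This says that the end represented by R* is the greatest element of the end order ≤_Ω of D.) -/
/-! In `D − X` (`X` finite) there are finitely many strong components, and in a tournament they
are linearly ordered by reachability, so there is a lowest infinite one, the *bottom component*.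
Enumerate `V` as `f 0, f 1, …` and let `X n = {f m | m < n}`. The bottom components of `D − X n`
decrease, and each is strongly connected, so paths inside them concatenate to an infinite walk
that eventually stays in each of them. Since the bottom component of `D − X n` avoids `X n`, the
walk visits every vertex only finitely often and therefore contains a ray `R*`, which is solid.
A solid ray `R` has a tail in an infinite strong component of `D − X n`, which reaches the bottom
component and hence the tail of `R*`; this yields `R`–`R*` paths avoiding any finite set, and
greedily infinitely many disjoint ones. -/

/-- Mutual reachability in `D − X`: `u` and `v` lie in the same strong component
of the restriction of `E` to the complement of `X`. -/
def SameComp {V : Type*} (E : V → V → Prop) (X : Set V) (u v : V) : Prop :=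
  Relation.ReflTransGen (fun a b => a ∉ X ∧ b ∉ X ∧ E a b) u v ∧
  Relation.ReflTransGen (fun a b => a ∉ X ∧ b ∉ X ∧ E a b) v u

/-- A digraph is solid if deleting any finite vertex set leaves only finitely many
strong components. -/
def IsSolid {V : Type*} (E : V → V → Prop) : Prop :=
  ∀ X : Set V, X.Finite →
    {C : Set V | ∃ v, v ∉ X ∧ C = {u | u ∉ X ∧ SameComp E X u v}}.Finite

/-- A ray in a digraph. -/
def IsRay {V : Type*} (E : V → V → Prop) (r : ℕ → V) : Prop :=
  Function.Injective r ∧ ∀ n : ℕ, E (r n) (r (n + 1))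

/-- A solid ray: it has a tail in a single strong component of `D − X`
for every finite `X`. -/
def IsSolidRay {V : Type*} (E : V → V → Prop) (r : ℕ → V) : Prop :=
  IsRay E r ∧ ∀ X : Set V, X.Finite →
    ∃ N : ℕ, (∀ n : ℕ, N ≤ n → r n ∉ X) ∧
      (∀ m n : ℕ, N ≤ m → N ≤ n → SameComp E X (r m) (r n))

/-- Two rays are equivalent if for every finite `X` they have tails in
the same strong component of `D − X`. -/
def RayEquiv {V : Type*} (E : V → V → Prop) (r r' : ℕ → V) : Prop :=
  ∀ X : Set V, X.Finite →
    ∃ N M : ℕ, (∀ n : ℕ, N ≤ n → r n ∉ X) ∧ (∀ m : ℕ, M ≤ m → r' m ∉ X) ∧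
      (∀ n m : ℕ, N ≤ n → M ≤ m → SameComp E X (r n) (r' m))

open Relation Set Function Filter

section

variable {α : Type*} {r : α → α → Prop}

theorem Relation.TransGen.exists_seq {a c : α} (h : TransGen r a c) :
    ∃ k, 0 < k ∧ ∃ p : ℕ → α, p 0 = a ∧ p k = c ∧ ∀ j < k, r (p j) (p (j + 1)) := by
  induction h using TransGen.head_induction_on with
  | @single a hac =>
    refine ⟨1, one_pos, fun j => match j with | 0 => a | _ + 1 => c, rfl, rfl, ?_⟩
    intro j hj
    obtain rfl : j = 0 := by omega
    exact hac
  | @head a b hab _ ih =>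
    obtain ⟨k, -, p, hp0, hpk, hp⟩ := ih
    refine ⟨k + 1, k.succ_pos, fun j => match j with | 0 => a | j + 1 => p j, rfl, hpk, ?_⟩
    rintro (_ | j) hj
    · show r a (p 0)
      rw [hp0]
      exact hab
    · exact hp j (by omega)

/-- Concatenating, for each `n`, an `R n`-path from `x n` to `x (n + 1)` gives an infinite walk;
`s i` is the index of the path that contains its `i`-th step. -/
theorem exists_walk_of_forall_transGen {R : ℕ → α → α → Prop} {x : ℕ → α}
    (h : ∀ n, TransGen (R n) (x n) (x (n + 1))) :
    ∃ (w : ℕ → α) (s : ℕ → ℕ), Tendsto s atTop atTop ∧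
      ∀ i, R (s i) (w i) (w (i + 1)) := by
  choose k hk p hp0 hpk hp using fun n => (h n).exists_seq
  let next : ℕ × ℕ → ℕ × ℕ := fun q =>
    if q.2 + 1 < k q.1 then (q.1, q.2 + 1) else (q.1 + 1, 0)
  let q : ℕ → ℕ × ℕ := fun i => next^[i] (0, 0)
  have hq_succ (i : ℕ) : q (i + 1) = next (q i) := iterate_succ_apply' next i (0, 0)
  have hq_lt (i : ℕ) : (q i).2 < k (q i).1 := by
    induction i with
    | zero => exact hk 0
    | succ i ih =>
      rw [hq_succ]
      by_cases hlt : (q i).2 + 1 < k (q i).1 <;> simp [next, hlt, hk]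
  have hq_advance (d i : ℕ) (hd : k (q i).1 - (q i).2 = d) : ∃ i', (q i).1 < (q i').1 := by
    induction d generalizing i with
    | zero => exact absurd hd (by have := hq_lt i; omega)
    | succ d ih =>
      by_cases hlt : (q i).2 + 1 < k (q i).1
      · have hq : q (i + 1) = ((q i).1, (q i).2 + 1) := by simp [hq_succ, next, hlt]
        obtain ⟨i', hi'⟩ := ih (i + 1) (by rw [hq]; dsimp only; omega)
        exact ⟨i', by rwa [hq] at hi'⟩
      · exact ⟨i + 1, by simp [hq_succ, next, hlt]⟩
  have hmono : Monotone fun i => (q i).1 := monotone_nat_of_le_succ fun i => by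
    rw [hq_succ]; by_cases hlt : (q i).2 + 1 < k (q i).1 <;> simp [next, hlt]
  have hunbdd (n : ℕ) : ∃ i, n ≤ (q i).1 := by
    induction n with
    | zero => exact ⟨0, Nat.zero_le _⟩
    | succ n ih =>
      obtain ⟨i, hi⟩ := ih
      obtain ⟨i', hi'⟩ := hq_advance _ i rfl
      exact ⟨i', by omega⟩
  refine ⟨fun i => p (q i).1 (q i).2, fun i => (q i).1,
    tendsto_atTop_atTop_of_monotone hmono hunbdd, fun i => ?_⟩
  have hstep := hp (q i).1 (q i).2 (hq_lt i)
  by_cases hlt : (q i).2 + 1 < k (q i).1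
  · simpa [hq_succ, next, hlt] using hstep
  · have hend : (q i).2 + 1 = k (q i).1 := by have := hq_lt i; omega
    simpa [hq_succ, next, hlt, hp0, ← hpk, hend] using hstep

/-- A walk visiting every vertex finitely often contains a ray: jump each time to the last
visit of the next vertex. -/
theorem exists_strictMono_injective_of_finite_fibers {w : ℕ → α}
    (hw : ∀ i, r (w i) (w (i + 1))) (hfin : ∀ a, {i | w i = a}.Finite) :
    ∃ t : ℕ → ℕ, StrictMono t ∧ Injective (w ∘ t) ∧ ∀ k, r (w (t k)) (w (t (k + 1))) := by
  let last : ℕ → ℕ := fun i => sSup {j | w j = w i}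
  have hw_last (i : ℕ) : w (last i) = w i :=
    Nat.sSup_mem (s := {j | w j = w i}) ⟨i, rfl⟩ (hfin _).bddAbove
  have le_last {i j : ℕ} (h : w j = w i) : j ≤ last i := le_csSup (hfin _).bddAbove h
  let t : ℕ → ℕ := fun k => Nat.rec (last 0) (fun _ tk => last (tk + 1)) k
  have ht_succ (k : ℕ) : t (k + 1) = last (t k + 1) := rfl
  have ht_last (k : ℕ) : last (t k) = t k := by
    obtain ⟨i, hi⟩ : ∃ i, t k = last i := by cases k <;> exact ⟨_, rfl⟩
    rw [hi]
    simp only [last, hw_last]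
  have hmono : StrictMono t := strictMono_nat_of_lt_succ fun k => by
    rw [ht_succ]; exact Nat.lt_of_lt_of_le (Nat.lt_succ_self _) (le_last rfl)
  refine ⟨t, hmono, fun j k hjk => hmono.injective (le_antisymm ?_ ?_), fun k => ?_⟩
  · exact ht_last k ▸ le_last hjk
  · exact ht_last j ▸ le_last hjk.symm
  · simp only [ht_succ, hw_last]
    exact hw _

theorem Relation.ReflTransGen.exists_nodup_isChain {a c : α} (h : ReflTransGen r a c) :
    ∃ l : List α, l.IsChain r ∧ l.Nodup ∧ l.head? = some a ∧ l.getLast? = some c ∧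
      ∀ x ∈ l, ReflTransGen r a x := by
  induction h using ReflTransGen.head_induction_on with
  | refl =>
    exact ⟨[c], .singleton c, List.nodup_singleton c, rfl, rfl,
      fun x hx => List.mem_singleton.1 hx ▸ .refl⟩
  | @head a b hab _ ih =>
    obtain ⟨l, hl, hnd, hhd, hlast, hreach⟩ := ih
    by_cases ha : a ∈ l
    · obtain ⟨l₁, l₂, rfl⟩ := List.append_of_mem ha
      refine ⟨a :: l₂, hl.suffix (List.suffix_append _ _),
        hnd.sublist (List.sublist_append_right _ _), rfl, ?_, fun x hx => ?_⟩
      · simpa [List.getLast?_append] using hlast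
      · rcases List.mem_cons.1 hx with rfl | hx
        · exact .refl
        · exact .head hab (hreach x (by simp [hx]))
    · obtain ⟨t, rfl⟩ : ∃ t, l = b :: t := by
        cases l with
        | nil => simp at hhd
        | cons d t => exact ⟨t, by simpa using hhd⟩
      refine ⟨a :: b :: t, .cons_cons hab hl, List.nodup_cons.2 ⟨ha, hnd⟩, rfl,
        by rwa [List.getLast?_cons_cons], fun x hx => ?_⟩
      rcases List.mem_cons.1 hx with rfl | hx
      · exact .refl
      · exact .head hab (hreach x hx)

theorem exists_seq_pairwise_disjoint_of_forall_finite {p : List α → Prop}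
    (h : ∀ X : Set α, X.Finite → ∃ l, p l ∧ ∀ x ∈ l, x ∉ X) :
    ∃ P : ℕ → List α, (∀ i, p (P i)) ∧ ∀ i j, i ≠ j → ∀ x, x ∈ P i → x ∉ P j := by
  choose next hnext havoid using h
  let U : ℕ → {X : Set α // X.Finite} := fun n =>
    Nat.rec ⟨∅, finite_empty⟩ (fun _ X => ⟨X.1 ∪ {x | x ∈ next X.1 X.2},
      X.2.union (List.finite_toSet _)⟩) n
  let P : ℕ → List α := fun n => next (U n).1 (U n).2
  have hU : Monotone fun n => (U n).1 := monotone_nat_of_le_succ fun _ => subset_union_left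
  have hlt {i j : ℕ} (hij : i < j) {x : α} (hx : x ∈ P i) : x ∉ P j := fun hxj =>
    havoid _ _ x hxj (hU (Nat.succ_le_of_lt hij) (Or.inr hx))
  refine ⟨P, fun i => hnext _ _, fun i j hij x hx hxj => ?_⟩
  rcases hij.lt_or_gt with h | h
  exacts [hlt h hx hxj, hlt h hxj hx]

theorem exists_subset_image_Iio_of_surjective {f : ℕ → α} (hf : Surjective f) {Y : Set α}
    (hY : Y.Finite) : ∃ n, Y ⊆ f '' Iio n := by
  obtain ⟨n, hn⟩ := (hY.image (surjInv hf)).bddAbove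
  exact ⟨n + 1, fun y hy =>
    ⟨surjInv hf y, Nat.lt_succ_of_le (hn (mem_image_of_mem _ hy)), surjInv_eq hf y⟩⟩

end

section Digraphs

variable {V : Type*} {E : V → V → Prop} {X Y : Set V} {u v w b : V}

def deleteVerts (E : V → V → Prop) (X : Set V) (a c : V) : Prop := a ∉ X ∧ c ∉ X ∧ E a c

def strongComp (E : V → V → Prop) (X : Set V) (v : V) : Set V :=
  {u | u ∉ X ∧ SameComp E X u v}

def IsBottom (E : V → V → Prop) (X : Set V) (b : V) : Prop :=
  (strongComp E X b).Infinite ∧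
    ∀ v, (strongComp E X v).Infinite → ReflTransGen (deleteVerts E X) v b

theorem deleteVerts_anti (hXY : X ⊆ Y) {a c : V} (h : deleteVerts E Y a c) :
    deleteVerts E X a c :=
  ⟨fun ha => h.1 (hXY ha), fun hc => h.2.1 (hXY hc), h.2.2⟩

theorem reflTransGen_deleteVerts_anti (hXY : X ⊆ Y) (h : ReflTransGen (deleteVerts E Y) u v) :
    ReflTransGen (deleteVerts E X) u v :=
  ReflTransGen.mono (fun _ _ => deleteVerts_anti hXY) _ _ h

theorem not_mem_of_reflTransGen_deleteVerts (hu : u ∉ X)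
    (h : ReflTransGen (deleteVerts E X) u v) : v ∉ X := by
  rcases h.cases_tail with rfl | ⟨c, -, hc⟩
  exacts [hu, hc.2.1]

theorem reflTransGen_deleteVerts_total (h_semi : ∀ u v, u ≠ v → E u v ∨ E v u)
    (hu : u ∉ X) (hv : v ∉ X) :
    ReflTransGen (deleteVerts E X) u v ∨ ReflTransGen (deleteVerts E X) v u := by
  rcases eq_or_ne u v with rfl | hne
  · exact Or.inl .refl
  · rcases h_semi u v hne with h | h
    exacts [Or.inl (.single ⟨hu, hv, h⟩), Or.inr (.single ⟨hv, hu, h⟩)]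

namespace SameComp

theorem refl (E : V → V → Prop) (X : Set V) (v : V) : SameComp E X v v := ⟨.refl, .refl⟩

theorem symm (h : SameComp E X u v) : SameComp E X v u := ⟨h.2, h.1⟩

theorem trans (h : SameComp E X u v) (h' : SameComp E X v w) : SameComp E X u w :=
  ⟨h.1.trans h'.1, h'.2.trans h.2⟩

theorem mono (hXY : X ⊆ Y) (h : SameComp E Y u v) : SameComp E X u v :=
  ⟨reflTransGen_deleteVerts_anti hXY h.1, reflTransGen_deleteVerts_anti hXY h.2⟩

end SameComp

theorem mem_strongComp_self (hv : v ∉ X) : v ∈ strongComp E X v := ⟨hv, .refl E X v⟩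

theorem not_mem_of_strongComp_nonempty (h : (strongComp E X v).Nonempty) : v ∉ X :=
  let ⟨_, hu, huv⟩ := h
  not_mem_of_reflTransGen_deleteVerts hu huv.1

theorem strongComp_eq (h : SameComp E X u v) : strongComp E X u = strongComp E X v := by
  ext w
  exact ⟨fun hw => ⟨hw.1, hw.2.trans h⟩, fun hw => ⟨hw.1, hw.2.trans h.symm⟩⟩

theorem strongComp_anti (hXY : X ⊆ Y) : strongComp E Y v ⊆ strongComp E X v :=
  fun _ hu => ⟨fun h => hu.1 (hXY h), hu.2.mono hXY⟩

/-- `deleteVerts E Cᶜ` is `E` restricted to `C`: paths of `D − X` between vertices of one strong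
component stay inside it. -/
theorem reflTransGen_deleteVerts_compl_strongComp (hu : u ∈ strongComp E X b)
    (hv : v ∈ strongComp E X b) :
    ReflTransGen (deleteVerts E (strongComp E X b)ᶜ) u v := by
  suffices ∀ a, ReflTransGen (deleteVerts E X) a v → a ∈ strongComp E X b →
      ReflTransGen (deleteVerts E (strongComp E X b)ᶜ) a v from
    this u (hu.2.trans hv.2.symm).1 hu
  intro a hav
  induction hav using ReflTransGen.head_induction_on with
  | refl => exact fun _ => .refl
  | @head a c hac hcv ih =>
    intro ha
    have hc : c ∈ strongComp E X b := ⟨hac.2.1, hcv.trans hv.2.1, ha.2.2.trans (.single hac)⟩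
    exact .head ⟨not_not.2 ha, not_not.2 hc, hac.2.2⟩ (ih hc)

theorem transGen_deleteVerts_compl_strongComp (hinf : (strongComp E X b).Infinite)
    (hu : u ∈ strongComp E X b) (hv : v ∈ strongComp E X b) :
    TransGen (deleteVerts E (strongComp E X b)ᶜ) u v := by
  obtain ⟨c, hc, hcu⟩ := (hinf.sdiff (finite_singleton u)).nonempty
  rcases reflTransGen_iff_eq_or_transGen.1 (reflTransGen_deleteVerts_compl_strongComp hu hc)
    with rfl | huc
  · exact absurd rfl hcu
  · exact huc.trans_left (reflTransGen_deleteVerts_compl_strongComp hc hv)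

namespace IsSolid

theorem exists_finite_strongComp_reps (h : IsSolid E) (hX : X.Finite) :
    ∃ S : Set V, S.Finite ∧ ∀ v ∉ X, ∃ s ∈ S, strongComp E X v = strongComp E X s := by
  obtain ⟨S, hSeq, hinj⟩ := exists_image_eq_and_injOn Xᶜ (strongComp E X)
  refine ⟨S, Finite.of_finite_image ?_ hinj, fun v hv => ?_⟩
  · rw [hSeq]
    exact (h X hX).subset (by rintro _ ⟨v, hv, rfl⟩; exact ⟨v, hv, rfl⟩)
  · obtain ⟨s, hs, hsv⟩ : strongComp E X v ∈ strongComp E X '' S :=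
      hSeq ▸ mem_image_of_mem _ hv
    exact ⟨s, hs, hsv.symm⟩

theorem exists_infinite_strongComp (h : IsSolid E) (hY : Y.Finite) {T : Set V}
    (hT : T.Infinite) (hTY : T ⊆ Yᶜ) : ∃ c ∈ T, (strongComp E Y c).Infinite := by
  obtain ⟨S, hS, hrep⟩ := h.exists_finite_strongComp_reps hY
  by_contra! hfin
  refine hT (((hS.sep fun s => (strongComp E Y s).Finite).biUnion fun s hs => hs.2).subset
    fun t ht => ?_)
  obtain ⟨s, hsS, hts⟩ := hrep t (hTY ht)
  exact mem_biUnion ⟨hsS, hts ▸ hfin t ht⟩ (hts ▸ mem_strongComp_self (hTY ht))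

end IsSolid

theorem exists_isBottom [Infinite V] (h_semi : ∀ u v, u ≠ v → E u v ∨ E v u)
    (h_solid : IsSolid E) (hX : X.Finite) : ∃ b, IsBottom E X b := by
  obtain ⟨S, hS, hrep⟩ := h_solid.exists_finite_strongComp_reps hX
  let S' : Set V := {s ∈ S | (strongComp E X s).Infinite}
  have : Finite S' := (hS.sep _).to_subtype
  have : Nonempty S' := by
    obtain ⟨c, hc, hinf⟩ := h_solid.exists_infinite_strongComp hX hX.infinite_compl subset_rfl
    obtain ⟨s, hs, hcs⟩ := hrep c hc
    exact ⟨s, hs, hcs ▸ hinf⟩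
  have hdir : Directed (ReflTransGen (deleteVerts E X)) ((↑) : S' → V) := fun s t => by
    rcases reflTransGen_deleteVerts_total h_semi (not_mem_of_strongComp_nonempty s.2.2.nonempty)
      (not_mem_of_strongComp_nonempty t.2.2.nonempty) with h | h
    exacts [⟨t, h, .refl⟩, ⟨s, .refl, h⟩]
  obtain ⟨b, hb⟩ := hdir.finite_le id
  refine ⟨b, b.2.2, fun v hv => ?_⟩
  have hvX := not_mem_of_strongComp_nonempty hv.nonempty
  obtain ⟨s, hsS, hvs⟩ := hrep v hvX
  exact (hvs ▸ mem_strongComp_self hvX).2.1.trans (hb ⟨s, hsS, hvs ▸ hv⟩)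

theorem IsBottom.strongComp_subset (h_solid : IsSolid E) (hXY : X ⊆ Y) (hY : Y.Finite)
    (hu : IsBottom E X u) (hb : IsBottom E Y b) : strongComp E Y b ⊆ strongComp E X u := by
  have hbu : ReflTransGen (deleteVerts E X) b u := hu.2 b (hb.1.mono (strongComp_anti hXY))
  obtain ⟨c, hc, hcinf⟩ :=
    h_solid.exists_infinite_strongComp hY (hu.1.sdiff hY) (sdiff_subset_compl _ _)
  have hub : ReflTransGen (deleteVerts E X) u b :=
    hc.1.2.2.trans (reflTransGen_deleteVerts_anti hXY (hb.2 c hcinf))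
  exact strongComp_eq ⟨hbu, hub⟩ ▸ strongComp_anti hXY

theorem exists_isSolidRay_eventually_mem {X : ℕ → Set V} {b : ℕ → V}
    (hexh : ∀ Y : Set V, Y.Finite → ∃ n, Y ⊆ X n)
    (hinf : ∀ n, (strongComp E (X n) (b n)).Infinite)
    (hsub : ∀ n, strongComp E (X (n + 1)) (b (n + 1)) ⊆ strongComp E (X n) (b n)) :
    ∃ R, IsSolidRay E R ∧ ∀ n, ∃ N, ∀ k ≥ N, R k ∈ strongComp E (X n) (b n) := by
  set B : ℕ → Set V := fun n => strongComp E (X n) (b n)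
  have hB : Antitone B := antitone_nat_of_succ_le hsub
  have hbB (n : ℕ) : b n ∈ B n :=
    mem_strongComp_self (not_mem_of_strongComp_nonempty (hinf n).nonempty)
  obtain ⟨w, s, hs, hw⟩ := exists_walk_of_forall_transGen (R := fun n => deleteVerts E (B n)ᶜ)
    fun n => transGen_deleteVerts_compl_strongComp (hinf n) (hbB n) (hsub n (hbB (n + 1)))
  have hw_mem (n : ℕ) : ∃ N, ∀ i ≥ N, w i ∈ B n := by
    obtain ⟨N, hN⟩ := tendsto_atTop_atTop.1 hs n
    refine ⟨N + 1, fun i hi => ?_⟩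
    obtain ⟨j, rfl⟩ : ∃ j, i = j + 1 := ⟨i - 1, by omega⟩
    exact hB (hN j (by omega)) (not_not.1 (hw j).2.1)
  have hfib (v : V) : {i | w i = v}.Finite := by
    obtain ⟨n, hn⟩ := hexh {v} (finite_singleton v)
    obtain ⟨N, hN⟩ := hw_mem n
    refine (finite_Iio N).subset fun i (hi : w i = v) => ?_
    by_contra hiN
    exact (hN i (not_lt.1 hiN)).1 (hi ▸ hn rfl)
  obtain ⟨t, ht, hinj, hstep⟩ :=
    exists_strictMono_injective_of_finite_fibers (fun i => (hw i).2.2) hfib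
  have hR_mem (n : ℕ) : ∃ N, ∀ k ≥ N, w (t k) ∈ B n := by
    obtain ⟨N, hN⟩ := hw_mem n
    exact ⟨N, fun k hk => hN _ (hk.trans (ht.id_le k))⟩
  refine ⟨w ∘ t, ⟨⟨hinj, hstep⟩, fun Y hY => ?_⟩, hR_mem⟩
  obtain ⟨n, hn⟩ := hexh Y hY
  obtain ⟨N, hN⟩ := hR_mem n
  exact ⟨N, fun k hk hY' => (hN k hk).1 (hn hY'),
    fun k l hk hl => ((hN k hk).2.trans (hN l hl).2.symm).mono hn⟩

namespace IsSolidRay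

theorem rayEquiv_self {R : ℕ → V} (hR : IsSolidRay E R) : RayEquiv E R R := fun X hX =>
  let ⟨N, hout, hsame⟩ := hR.2 X hX
  ⟨N, N, hout, hout, hsame⟩

theorem exists_path_avoiding {R R' : ℕ → V} (hR : IsSolidRay E R) (hX : X.Finite)
    (hb : IsBottom E X b) {N' : ℕ} (hR' : ∀ k ≥ N', R' k ∈ strongComp E X b) :
    ∃ l : List V, (l.IsChain E ∧ l.Nodup ∧ (∃ x ∈ range R, l.head? = some x) ∧
      (∃ y ∈ range R', l.getLast? = some y)) ∧ ∀ x ∈ l, x ∉ X := by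
  obtain ⟨N, hout, hsame⟩ := hR.2 X hX
  have hinf : (strongComp E X (R N)).Infinite :=
    infinite_of_injective_forall_mem (f := fun i => R (N + i))
      (fun i j hij => by simpa using hR.1.1 hij)
      fun i => ⟨hout _ (by omega), hsame _ _ (by omega) le_rfl⟩
  obtain ⟨l, hl, hnd, hhd, hlast, hreach⟩ :=
    ((hb.2 _ hinf).trans (hR' N' le_rfl).2.2).exists_nodup_isChain
  exact ⟨l, ⟨hl.imp fun _ _ h => h.2.2, hnd, ⟨_, mem_range_self N, hhd⟩,
    ⟨_, mem_range_self N', hlast⟩⟩,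
    fun x hx => not_mem_of_reflTransGen_deleteVerts (hout N le_rfl) (hreach x hx)⟩

end IsSolidRay

end Digraphs

theorem stmt_7_general {V : Type*} [Countable V] [Infinite V] (E : V → V → Prop)
    (h_tour : ∀ u v : V, u ≠ v → Xor' (E u v) (E v u))
    (h_solid : IsSolid E) :
    (∃ R : ℕ → V, IsSolidRay E R) ∧
    ∃ Rstar : ℕ → V, IsSolidRay E Rstar ∧
      ∀ R : ℕ → V, IsSolidRay E R →
        ∃ R₁ R₂ : ℕ → V, IsRay E R₁ ∧ IsRay E R₂ ∧
          RayEquiv E R₁ R ∧ RayEquiv E R₂ Rstar ∧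
          ∃ P : ℕ → List V,
            (∀ i : ℕ, (P i).Chain' E ∧ (P i).Nodup ∧
              (∃ x ∈ Set.range R₁, (P i).head? = some x) ∧
              (∃ y ∈ Set.range R₂, (P i).getLast? = some y)) ∧
            (∀ i j : ℕ, i ≠ j → ∀ x : V, x ∈ P i → x ∉ P j) := by
  obtain ⟨f, hf⟩ := exists_surjective_nat V
  have hXfin (n : ℕ) : (f '' Iio n).Finite := (finite_Iio n).image f
  choose b hb using fun n =>
    exists_isBottom (fun u v huv => Xor.or (h_tour u v huv)) h_solid (hXfin n)
  obtain ⟨Rstar, hRstar, htail⟩ := exists_isSolidRay_eventually_mem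
    (fun Y hY => exists_subset_image_Iio_of_surjective hf hY) (fun n => (hb n).1)
    fun n => (hb n).strongComp_subset h_solid (image_mono (Iio_subset_Iio n.le_succ))
      (hXfin _) (hb (n + 1))
  refine ⟨⟨Rstar, hRstar⟩, Rstar, hRstar, fun R hR => ⟨R, Rstar, hR.1, hRstar.1,
    hR.rayEquiv_self, hRstar.rayEquiv_self, ?_⟩⟩
  obtain ⟨P, hP, hdisj⟩ := exists_seq_pairwise_disjoint_of_forall_finite fun Y hY => by
    obtain ⟨n, hn⟩ := exists_subset_image_Iio_of_surjective hf hY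
    obtain ⟨N, hN⟩ := htail n
    obtain ⟨l, hl, hlX⟩ := hR.exists_path_avoiding (hXfin n) (hb n) hN
    exact ⟨l, hl, fun x hx hxY => hlX x hx (hn hxY)⟩
  exact ⟨P, hP, hdisj⟩

theorem stmt_7 {V : Type*} [Countable V] [Infinite V] (E : V → V → Prop)
    (h_irr : ∀ v : V, ¬ E v v)
    (h_tour : ∀ u v : V, u ≠ v → Xor' (E u v) (E v u))
    (h_solid : IsSolid E) :
    (∃ R : ℕ → V, IsSolidRay E R) ∧
    ∃ Rstar : ℕ → V, IsSolidRay E Rstar ∧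
      ∀ R : ℕ → V, IsSolidRay E R →
        ∃ R₁ R₂ : ℕ → V, IsRay E R₁ ∧ IsRay E R₂ ∧
          RayEquiv E R₁ R ∧ RayEquiv E R₂ Rstar ∧
          ∃ P : ℕ → List V,
            (∀ i : ℕ, (P i).Chain' E ∧ (P i).Nodup ∧
              (∃ x ∈ Set.range R₁, (P i).head? = some x) ∧
              (∃ y ∈ Set.range R₂, (P i).getLast? = some y)) ∧
            (∀ i j : ℕ, i ≠ j → ∀ x : V, x ∈ P i → x ∉ P j) :=
  stmt_7_general E h_tour h_solid
end

section
/- The tournament D₀ has no spanning double ray: there is no injective map w : ℤ → V₀ with E₀ (w n) (w (n+1)) for all n ∈ ℤ whose image is all of V₀. -/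
/-!
Along any walk in `D₀` the branch index never decreases, so the walk visits `(0, 0)`, then all of
branch `1`, then `(2, 0)`. A double ray indexed by `ℤ` has only finitely many steps between two
given ones, which cannot exhaust the infinite branch `1`.
-/

/-- The edge relation of the counterexample tournament `D₀` on `Fin 3 × ℕ`:
edges go up in branch index; within a branch, to the immediate successor,
or back down by at least two. -/
def E₀ : Fin 3 × ℕ → Fin 3 × ℕ → Prop := fun p q =>
  p.1 < q.1 ∨ (p.1 = q.1 ∧ q.2 = p.2 + 1) ∨ (p.1 = q.1 ∧ p.2 ≥ q.2 + 2)

lemma E₀.fst_le {p q : Fin 3 × ℕ} (h : E₀ p q) : p.1 ≤ q.1 := by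
  rcases h with h | ⟨h, -⟩ | ⟨h, -⟩ <;> exact h.le

lemma Monotone.finite_preimage_singleton_of_lt_of_lt {ι α : Type*} [LinearOrder ι]
    [LocallyFiniteOrder ι] [Preorder α] {g : ι → α} (hg : Monotone g) {i k : ι} {b : α}
    (hi : g i < b) (hk : b < g k) : (g ⁻¹' {b}).Finite := by
  refine (Set.finite_Ioo i k).subset fun n (hn : g n = b) => ⟨?_, ?_⟩
  · exact hg.reflect_lt (hn ▸ hi)
  · exact hg.reflect_lt (hn ▸ hk)

theorem stmt_12 :
    ¬ ∃ w : ℤ → Fin 3 × ℕ, Function.Injective w ∧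
      (∀ n : ℤ, E₀ (w n) (w (n + 1))) ∧ Set.range w = Set.univ := by
  rintro ⟨w, -, hE, hrange⟩
  have hsurj : Function.Surjective w := Set.range_eq_univ.mp hrange
  have hmono : Monotone fun n => (w n).1 := monotone_int_of_le_succ fun n => (hE n).fst_le
  obtain ⟨i, hi⟩ := hsurj (0, 0)
  obtain ⟨k, hk⟩ := hsurj (2, 0)
  have hfinite : (w ⁻¹' (Prod.fst ⁻¹' {1})).Finite :=
    hmono.finite_preimage_singleton_of_lt_of_lt (i := i) (k := k) (by simp [hi]) (by simp [hk])
  have hbranch : (Prod.fst ⁻¹' {(1 : Fin 3)} : Set (Fin 3 × ℕ)).Infinite := by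
    rw [← Set.prod_univ]
    exact Set.infinite_prod.mpr (Or.inr ⟨Set.infinite_univ, Set.singleton_nonempty 1⟩)
  exact hbranch <| by simpa only [Set.image_preimage_eq _ hsurj] using hfinite.image w
end
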